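/- arXiv:nlin/0201024 — 3 statements merged into one kernel-verified Lean document; each statement's English description precedes it below -/
import Mathlib

section
/- Fix t ≥ 0. Define F_t(u_1,u_2) = ( ((-u_1+u_2) u_1 e^{(u_2-u_1)t}) / (u_2 - u_1 e^{(u_2-u_1)t}), ((u_2-u_1) u_2) / (u_2 - u_1 e^{(u_2-u_1)t}) ) on the set where u_2 - u_1 e^{(u_2-u_1)t} ≠ 0, and define G_t(v_1,v_2) = ( ((v_1-v_2) v_1 e^{(v_1-v_2)t}) / (v_1 e^{(v_1-v_2)t} - v_2), ((v_1-v_2) v_2) / (v_1 e^{(v_1-v_2)t} - v_2) ) on the set where v_1 e^{(v_1-v_2)t} - v_2 ≠ 0. Then for nonnegative arguments with distinct components, F_t and G_t are mutually inverse: G_t(F_t(u_1,u_2)) = (u_1,u_2) and F_t(G_t(v_1,v_2)) = (v_1,v_2). -/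
/-- the backward characteristic map `F_t` and the forward flow `G_t` of the
system `u₁' = u₂' = -u₁u₂` are mutually inverse on nonnegative arguments with distinct
components (on the sets where the respective denominators do not vanish). -/
theorem stmt_9 (t : ℝ) (ht : 0 ≤ t)
    (F G : ℝ × ℝ → ℝ × ℝ)
    (hF : ∀ p : ℝ × ℝ,
      F p = (((-p.1 + p.2) * p.1 * Real.exp ((p.2 - p.1) * t)) /
               (p.2 - p.1 * Real.exp ((p.2 - p.1) * t)),
             ((p.2 - p.1) * p.2) / (p.2 - p.1 * Real.exp ((p.2 - p.1) * t))))
    (hG : ∀ p : ℝ × ℝ,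
      G p = (((p.1 - p.2) * p.1 * Real.exp ((p.1 - p.2) * t)) /
               (p.1 * Real.exp ((p.1 - p.2) * t) - p.2),
             ((p.1 - p.2) * p.2) / (p.1 * Real.exp ((p.1 - p.2) * t) - p.2))) :
    (∀ u1 u2 : ℝ, 0 ≤ u1 → 0 ≤ u2 → u1 ≠ u2 →
      u2 - u1 * Real.exp ((u2 - u1) * t) ≠ 0 → G (F (u1, u2)) = (u1, u2)) ∧
    (∀ v1 v2 : ℝ, 0 ≤ v1 → 0 ≤ v2 → v1 ≠ v2 →
      v1 * Real.exp ((v1 - v2) * t) - v2 ≠ 0 → F (G (v1, v2)) = (v1, v2)) := by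
  constructor
  · intro u1 u2 _ _ hne hD
    have hE : Real.exp ((u2 - u1) * t) ≠ 0 := Real.exp_ne_zero _
    simp only [hF, hG, Prod.mk.injEq]
    set E := Real.exp ((u2 - u1) * t) with hEdef
    have hab : (-u1 + u2) * u1 * E / (u2 - u1 * E) - (u2 - u1) * u2 / (u2 - u1 * E)
        = u1 - u2 := by
      field_simp
      ring
    rw [hab]
    have hexp : Real.exp ((u1 - u2) * t) = E⁻¹ := by
      rw [hEdef, ← Real.exp_neg]
      ring_nf
    rw [hexp]
    have hden : (-u1 + u2) * u1 * E / (u2 - u1 * E) * E⁻¹ - (u2 - u1) * u2 / (u2 - u1 * E)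
        = -(u2 - u1) ^ 2 / (u2 - u1 * E) := by
      field_simp
      ring
    rw [hden]
    have hsq : -(u2 - u1) ^ 2 ≠ 0 := by
      simp [sub_eq_zero, Ne.symm hne]
    constructor <;> rw [div_eq_iff (div_ne_zero hsq hD)] <;> field_simp <;> ring
  · intro v1 v2 _ _ hne hD
    have hE : Real.exp ((v1 - v2) * t) ≠ 0 := Real.exp_ne_zero _
    simp only [hF, hG, Prod.mk.injEq]
    set E := Real.exp ((v1 - v2) * t) with hEdef
    have hab : (v1 - v2) * v2 / (v1 * E - v2) - (v1 - v2) * v1 * E / (v1 * E - v2)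
        = v2 - v1 := by
      field_simp
      ring
    rw [hab]
    have hexp : Real.exp ((v2 - v1) * t) = E⁻¹ := by
      rw [hEdef, ← Real.exp_neg]
      ring_nf
    rw [hexp]
    have hden : (v1 - v2) * v2 / (v1 * E - v2) - (v1 - v2) * v1 * E / (v1 * E - v2) * E⁻¹
        = -(v1 - v2) ^ 2 / (v1 * E - v2) := by
      field_simp
      ring
    rw [hden]
    have hsq : -(v1 - v2) ^ 2 ≠ 0 := by
      simp [sub_eq_zero, hne]
    constructor <;> rw [div_eq_iff (div_ne_zero hsq hD)] <;> field_simp <;> ring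
end

section
/- Let N ≥ 1, D0 > 0, and take front initial data u_1^0(y) = 1 if y_1 < 0 and 0 if y_1 ≥ 0, and u_2^0(y) = 1 - u_1^0(y). Then the ensemble-averaged fuel concentration satisfies, for all t > 0 and x ∈ R^N, E[u_1](x,t) = ∫_{ {y : y_1 < 0} } (2π D0 t)^{-N/2} exp(-|x-y|^2/(2 D0 t)) dy, i.e. it agrees exactly with the thin-reaction-zone empirical formula E[u_1] = ∫_{Z>0} Z P(Z) dZ computed from the Gaussian statistics of the inert scalar Z = u_1 - u_2. -/
open MeasureTheory

/-- for front initial data the ensemble-averaged fuel concentration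
`E[u₁](x,t) = ∫ K(x,y,t) U₁(y,t) dy` equals the thin-reaction-zone empirical formula,
i.e. the heat-kernel mass of the half-space `{y₁ < 0}` (equivalently, the integral of
`Z⁰ = u₁⁰ - u₂⁰` against the kernel over `{Z⁰ > 0}`). -/
theorem stmt_14 (N : ℕ) (hN : 0 < N) (D0 : ℝ) (hD0 : 0 < D0)
    (u10 u20 : (Fin N → ℝ) → ℝ)
    (hu10 : ∀ y, u10 y = if y ⟨0, hN⟩ < 0 then 1 else 0)
    (hu20 : ∀ y, u20 y = 1 - u10 y)
    (U1 : (Fin N → ℝ) → ℝ → ℝ)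
    (hU1 : ∀ y t, U1 y t =
      (u10 y - u20 y) * u10 y * Real.exp ((u10 y - u20 y) * t) /
        (u10 y * Real.exp ((u10 y - u20 y) * t) - u20 y)) :
    ∀ t > (0 : ℝ), ∀ x : Fin N → ℝ,
      (∫ y : Fin N → ℝ, (2 * Real.pi * D0 * t) ^ (-(N : ℝ) / 2) *
          Real.exp (-(∑ i, (x i - y i) ^ 2) / (2 * D0 * t)) * U1 y t)
        = (∫ y in {y : Fin N → ℝ | y ⟨0, hN⟩ < 0},
            (2 * Real.pi * D0 * t) ^ (-(N : ℝ) / 2) *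
              Real.exp (-(∑ i, (x i - y i) ^ 2) / (2 * D0 * t))) ∧
      (∫ y : Fin N → ℝ, (2 * Real.pi * D0 * t) ^ (-(N : ℝ) / 2) *
          Real.exp (-(∑ i, (x i - y i) ^ 2) / (2 * D0 * t)) * U1 y t)
        = ∫ y in {y : Fin N → ℝ | 0 < u10 y - u20 y},
            (u10 y - u20 y) *
              ((2 * Real.pi * D0 * t) ^ (-(N : ℝ) / 2) *
                Real.exp (-(∑ i, (x i - y i) ^ 2) / (2 * D0 * t))) := by

  intro t ht x
  have hU : ∀ y, U1 y t = if y ⟨0, hN⟩ < 0 then 1 else 0 := by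
    intro y
    rw [hU1, hu20, hu10]
    by_cases h : y ⟨0, hN⟩ < 0 <;> simp [h, Real.exp_ne_zero]
  set S : Set (Fin N → ℝ) := {y : Fin N → ℝ | y ⟨0, hN⟩ < 0} with hS
  have hSmeas : MeasurableSet S :=
    measurableSet_lt (measurable_pi_apply _) measurable_const
  set K : (Fin N → ℝ) → ℝ := fun y => (2 * Real.pi * D0 * t) ^ (-(N : ℝ) / 2) *
      Real.exp (-(∑ i, (x i - y i) ^ 2) / (2 * D0 * t)) with hK
  have key : (∫ y : Fin N → ℝ, K y * U1 y t) = ∫ y in S, K y := by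
    rw [← integral_indicator hSmeas]
    congr 1
    ext y
    rw [hU y]
    by_cases h : y ⟨0, hN⟩ < 0 <;> simp [Set.indicator, hS, h]
  refine ⟨key, key.trans ?_⟩
  have hset : {y : Fin N → ℝ | 0 < u10 y - u20 y} = S := by
    ext y
    rw [Set.mem_setOf_eq, hu20, hu10, hS, Set.mem_setOf_eq]
    by_cases h : y ⟨0, hN⟩ < 0 <;> simp [h] <;> norm_num
  rw [hset]
  apply setIntegral_congr_fun hSmeas
  intro y hy
  simp only [hS, Set.mem_setOf_eq] at hy
  simp only [hu20, hu10, hy, if_true]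
  ring
end

section
/- Let D3 > 0, M ∈ R, and let G0 : R → [0,∞) be bounded and measurable with G0(η) = 0 for all η > M. Let G(ξ,t) = (4π D3 t)^{-1/2} ∫_R exp( -(ξ - η + D3 t)^2 / (4 D3 t) ) G0(η) dη. Then for every t > 0 and every ξ with ξ + D3 t ≥ M, one has 0 ≤ G(ξ,t) ≤ (sup G0) · exp( -(ξ + D3 t - M)^2 / (4 D3 t) ). In particular, for each fixed ξ, G(ξ,t) decays exponentially in t as t → ∞ (at rate at least D3/4), which gives the exponential decay of the two-point correlation function on any compact set of separations r = e^{ξ/N} away from zero. -/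
open MeasureTheory

/-- pointwise Gaussian bound for the solution of the drift-diffusion
equation with nonnegative bounded data vanishing for `η > M`: for `ξ + D3 t ≥ M`,
`0 ≤ G(ξ,t) ≤ (sup G0) exp(-(ξ + D3 t - M)²/(4 D3 t))`, giving exponential decay in `t`. -/
theorem stmt_19 (D3 M : ℝ) (hD3 : 0 < D3)
    (G0 : ℝ → ℝ) (hG0m : Measurable G0) (hG0pos : ∀ η, 0 ≤ G0 η)
    (hG0bdd : BddAbove (Set.range G0))
    (hG0supp : ∀ η, M < η → G0 η = 0)
    (G : ℝ → ℝ → ℝ)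
    (hG : ∀ ξ t : ℝ, G ξ t =
      (4 * Real.pi * D3 * t) ^ (-(1 : ℝ) / 2) *
        ∫ η : ℝ, Real.exp (-(ξ - η + D3 * t) ^ 2 / (4 * D3 * t)) * G0 η) :
    ∀ t > (0 : ℝ), ∀ ξ : ℝ, M ≤ ξ + D3 * t →
      0 ≤ G ξ t ∧
      G ξ t ≤ (⨆ η, G0 η) * Real.exp (-(ξ + D3 * t - M) ^ 2 / (4 * D3 * t)) := by
  intro t ht ξ hξM
  have hc : (0 : ℝ) < 4 * D3 * t := by positivity
  have hb : (0 : ℝ) < (4 * D3 * t)⁻¹ := by positivity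
  set a := ξ + D3 * t - M with ha
  have ha0 : 0 ≤ a := by simp only [ha]; linarith
  set S := ⨆ η, G0 η with hS
  have hSub : ∀ η, G0 η ≤ S := fun η => le_ciSup hG0bdd η
  have hS0 : 0 ≤ S := le_trans (hG0pos 0) (hSub 0)
  have hx : (0 : ℝ) < 4 * Real.pi * D3 * t := by positivity
  have hcoef : 0 ≤ (4 * Real.pi * D3 * t) ^ (-(1 : ℝ) / 2) :=
    Real.rpow_nonneg hx.le _
  rw [hG ξ t]
  have hE0 : 0 ≤ Real.exp (-a ^ 2 / (4 * D3 * t)) := (Real.exp_pos _).le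
  -- pointwise bound
  have hpt : ∀ η, Real.exp (-(ξ - η + D3 * t) ^ 2 / (4 * D3 * t)) * G0 η
      ≤ (S * Real.exp (-a ^ 2 / (4 * D3 * t))) *
          Real.exp (-(4 * D3 * t)⁻¹ * (η - M) ^ 2) := by
    intro η
    by_cases hη : M < η
    · rw [hG0supp η hη, mul_zero]
      positivity
    · push_neg at hη
      have hMη : 0 ≤ M - η := by linarith
      have hkey : a ^ 2 + (η - M) ^ 2 ≤ (ξ - η + D3 * t) ^ 2 := by
        have h1 : ξ - η + D3 * t = a + (M - η) := by rw [ha]; ring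
        nlinarith [mul_nonneg ha0 hMη]
      have h2 : Real.exp (-(ξ - η + D3 * t) ^ 2 / (4 * D3 * t))
          ≤ Real.exp (-a ^ 2 / (4 * D3 * t)) *
              Real.exp (-(4 * D3 * t)⁻¹ * (η - M) ^ 2) := by
        rw [← Real.exp_add]
        apply Real.exp_le_exp.mpr
        have : -a ^ 2 / (4 * D3 * t) + -(4 * D3 * t)⁻¹ * (η - M) ^ 2
            = -(a ^ 2 + (η - M) ^ 2) / (4 * D3 * t) := by field_simp; ring
        rw [this]
        gcongr
      calc Real.exp (-(ξ - η + D3 * t) ^ 2 / (4 * D3 * t)) * G0 η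
          ≤ (Real.exp (-a ^ 2 / (4 * D3 * t)) *
              Real.exp (-(4 * D3 * t)⁻¹ * (η - M) ^ 2)) * S :=
            mul_le_mul h2 (hSub η) (hG0pos η) (by positivity)
        _ = (S * Real.exp (-a ^ 2 / (4 * D3 * t))) *
              Real.exp (-(4 * D3 * t)⁻¹ * (η - M) ^ 2) := by ring
  -- integrability of the bounding function
  have hint : Integrable (fun η : ℝ =>
      (S * Real.exp (-a ^ 2 / (4 * D3 * t))) *
        Real.exp (-(4 * D3 * t)⁻¹ * (η - M) ^ 2)) := by
    apply Integrable.const_mul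
    exact (integrable_exp_neg_mul_sq hb).comp_sub_right M
  constructor
  · apply mul_nonneg hcoef
    apply integral_nonneg
    intro η
    exact mul_nonneg (Real.exp_pos _).le (hG0pos η)
  · have hmeas : Measurable (fun η : ℝ =>
        Real.exp (-(ξ - η + D3 * t) ^ 2 / (4 * D3 * t)) * G0 η) := by
      apply Measurable.mul _ hG0m
      exact (Real.measurable_exp.comp (by fun_prop))
    have hintf : Integrable (fun η : ℝ =>
        Real.exp (-(ξ - η + D3 * t) ^ 2 / (4 * D3 * t)) * G0 η) := by
      refine hint.mono' hmeas.aestronglyMeasurable ?_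
      filter_upwards with η
      rw [Real.norm_eq_abs, abs_of_nonneg (mul_nonneg (Real.exp_pos _).le (hG0pos η))]
      exact hpt η
    have hIle : (∫ η : ℝ, Real.exp (-(ξ - η + D3 * t) ^ 2 / (4 * D3 * t)) * G0 η)
        ≤ ∫ η : ℝ, (S * Real.exp (-a ^ 2 / (4 * D3 * t))) *
            Real.exp (-(4 * D3 * t)⁻¹ * (η - M) ^ 2) :=
      integral_mono hintf hint hpt
    have hIval : (∫ η : ℝ, (S * Real.exp (-a ^ 2 / (4 * D3 * t))) *
        Real.exp (-(4 * D3 * t)⁻¹ * (η - M) ^ 2))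
        = (S * Real.exp (-a ^ 2 / (4 * D3 * t))) * Real.sqrt (4 * Real.pi * D3 * t) := by
      rw [integral_const_mul]
      congr 1
      rw [integral_sub_right_eq_self (fun x : ℝ => Real.exp (-(4 * D3 * t)⁻¹ * x ^ 2)) M,
        integral_gaussian]
      congr 1
      field_simp
    have hfin : (4 * Real.pi * D3 * t) ^ (-(1 : ℝ) / 2) *
        Real.sqrt (4 * Real.pi * D3 * t) = 1 := by
      rw [Real.sqrt_eq_rpow, ← Real.rpow_add hx]
      norm_num
    calc (4 * Real.pi * D3 * t) ^ (-(1 : ℝ) / 2) *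
          ∫ η : ℝ, Real.exp (-(ξ - η + D3 * t) ^ 2 / (4 * D3 * t)) * G0 η
        ≤ (4 * Real.pi * D3 * t) ^ (-(1 : ℝ) / 2) *
          ((S * Real.exp (-a ^ 2 / (4 * D3 * t))) * Real.sqrt (4 * Real.pi * D3 * t)) := by
          rw [← hIval]
          exact mul_le_mul_of_nonneg_left hIle hcoef
      _ = (S * Real.exp (-a ^ 2 / (4 * D3 * t))) *
          ((4 * Real.pi * D3 * t) ^ (-(1 : ℝ) / 2) * Real.sqrt (4 * Real.pi * D3 * t)) := by
          ring
      _ = S * Real.exp (-a ^ 2 / (4 * D3 * t)) := by rw [hfin, mul_one]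
end
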